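/- Let F be a free group and N a normal subgroup of F such that the quotient F/N is isomorphic to a free group. Let K_3 := Γ_3F ⊔ [F, N]. Then N ∩ K_3 = [F, N]. Equivalently, the natural map N/[F,N] → K_2/K_3 (where K_2 = N ⊔ Γ_2F) induced by the inclusion N ⊆ K_2 is injective. -/

import Mathlib

/-!
When `F/N` is free, the quotient map `F → F/N` has a homomorphic section `s`, and `π = s ∘ mk`
kills `N` while moving each `x` only by an element `x⁻¹ π x` of `N`. Modulo `[F, N]` these
elements are central, and commutators do not see central factors, so `π` is the identity on
`[F, F]` modulo `[F, N]`. An element of `N ∩ [F, F]` is therefore trivial modulo `[F, N]`,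
i.e. `N ∩ [F, F] = [F, N]`, which is stronger than the claim since `Γ₃F ⊔ [F, N] ≤ [F, F]`.
-/

open scoped commutatorElement

namespace Subgroup

variable {G : Type*} [Group G]

lemma commutatorElement_mul_mem_center_left {a z : G} (hz : z ∈ center G) (b : G) :
    ⁅a * z, b⁆ = ⁅a, b⁆ := by
  have hzb : ⁅z, b⁆ = 1 :=
    commutatorElement_eq_one_iff_mul_comm.mpr (mem_center_iff.mp hz b).symm
  rw [commutatorElement_mul_left_eq_conj_mul, hzb, mul_one, mul_inv_cancel, one_mul]

lemma commutatorElement_mul_mem_center_right (a : G) {b w : G} (hw : w ∈ center G) :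
    ⁅a, b * w⁆ = ⁅a, b⁆ := by
  rw [← commutatorElement_inv, commutatorElement_mul_mem_center_left hw, commutatorElement_inv]

lemma map_le_center_quotient_commutator_top (N : Subgroup G) [N.Normal] :
    N.map (QuotientGroup.mk' ⁅(⊤ : Subgroup G), N⁆) ≤ center (G ⧸ ⁅(⊤ : Subgroup G), N⁆) := by
  rw [← commutator_top_left_eq_bot_iff_le_center,
    ← map_top_of_surjective _ (QuotientGroup.mk'_surjective _), ← map_commutator,
    map_eq_bot_iff, QuotientGroup.ker_mk']

end Subgroup

namespace MonoidHom

variable {G H : Type*} [Group G] [Group H]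

lemma commutator_le_eqLocus_of_inv_mul_mem_center (f g : G →* H)
    (hfg : ∀ x, (f x)⁻¹ * g x ∈ Subgroup.center H) : commutator G ≤ f.eqLocus g := by
  rw [commutator_def, Subgroup.commutator_le]
  intro a _ b _
  have hg : ∀ x, g x = f x * ((f x)⁻¹ * g x) := fun x => (mul_inv_cancel_left _ _).symm
  change f ⁅a, b⁆ = g ⁅a, b⁆
  rw [map_commutatorElement, map_commutatorElement, hg a, hg b,
    Subgroup.commutatorElement_mul_mem_center_left (hfg a),
    Subgroup.commutatorElement_mul_mem_center_right _ (hfg b)]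

lemma ker_inf_commutator_le_of_rightInverse {Q : Type*} [Group Q] (f : G →* Q) (s : Q →* G)
    (hs : ∀ q, f (s q) = q) : f.ker ⊓ commutator G ≤ ⁅(⊤ : Subgroup G), f.ker⁆ := by
  set p := QuotientGroup.mk' ⁅(⊤ : Subgroup G), f.ker⁆
  have hmem_ker : ∀ x, x⁻¹ * s (f x) ∈ f.ker := fun x => by
    rw [mem_ker, map_mul, hs, map_inv, inv_mul_cancel]
  have hagree : commutator G ≤ p.eqLocus (p.comp (s.comp f)) :=
    commutator_le_eqLocus_of_inv_mul_mem_center _ _ fun x => by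
      rw [comp_apply, comp_apply, ← map_inv, ← map_mul]
      exact Subgroup.map_le_center_quotient_commutator_top _ ⟨_, hmem_ker x, rfl⟩
  rintro x ⟨hx_ker, hx_comm⟩
  have hpx : p x = p (s (f x)) := hagree hx_comm
  rw [mem_ker.mp hx_ker, map_one, map_one] at hpx
  rwa [← QuotientGroup.ker_mk' ⁅(⊤ : Subgroup G), f.ker⁆, mem_ker]

end MonoidHom

lemma FreeGroup.exists_rightInverse_of_surjective {G Y : Type*} [Group G] (f : G →* FreeGroup Y)
    (hf : Function.Surjective f) : ∃ s : FreeGroup Y →* G, ∀ q, f (s q) = q := by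
  refine ⟨FreeGroup.lift fun y => Function.surjInv hf (FreeGroup.of y), fun q => ?_⟩
  have hcomp : f.comp (FreeGroup.lift fun y => Function.surjInv hf (FreeGroup.of y)) =
      MonoidHom.id _ :=
    FreeGroup.ext_hom _ _ fun y => by simp [Function.surjInv_eq]
  exact DFunLike.congr_fun hcomp q

/-- If F is a free group and N a normal subgroup of F such that F/N is (isomorphic to)
a free group, then with K₃ = Γ₃F ⊔ [F, N] one has N ⊓ K₃ = [F, N]; equivalently the
natural map N/[F,N] → K₂/K₃ is injective. -/
theorem stmt12 (X Y : Type*) (N : Subgroup (FreeGroup X)) [N.Normal]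
    (e : (FreeGroup X ⧸ N) ≃* FreeGroup Y) :
    N ⊓ ((⊤ : Subgroup (FreeGroup X)).lowerCentralSeries 2 ⊔ ⁅(⊤ : Subgroup (FreeGroup X)), N⁆)
      = ⁅(⊤ : Subgroup (FreeGroup X)), N⁆ := by
  set f : FreeGroup X →* FreeGroup Y :=
    (e : FreeGroup X ⧸ N →* FreeGroup Y).comp (QuotientGroup.mk' N)
  have hker : f.ker = N := by
    rw [MonoidHom.ker_mulEquiv_comp, QuotientGroup.ker_mk']
  obtain ⟨s, hs⟩ := FreeGroup.exists_rightInverse_of_surjective f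
    (e.surjective.comp (QuotientGroup.mk'_surjective N))
  have hΓ₃ : (⊤ : Subgroup (FreeGroup X)).lowerCentralSeries 2 ≤ commutator (FreeGroup X) := by
    rw [← Subgroup.top_lowerCentralSeries_one]
    exact Subgroup.lowerCentralSeries_antitone _ (by norm_num)
  have hFN : ⁅(⊤ : Subgroup (FreeGroup X)), N⁆ ≤ commutator (FreeGroup X) :=
    Subgroup.commutator_mono le_rfl le_top
  refine le_antisymm ?_ (le_inf (Subgroup.commutator_le_right ⊤ N) le_sup_right)
  calc N ⊓ (_ ⊔ _) ≤ N ⊓ commutator (FreeGroup X) := inf_le_inf_left _ (sup_le hΓ₃ hFN)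
    _ ≤ ⁅⊤, N⁆ := hker ▸ f.ker_inf_commutator_le_of_rightInverse s hs
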